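/- For all (x,y) ∈ ℝ² with L(x,y)·K(x,y) ≠ 0, one has K(x,y)·A₁(F(x,y)) = A₁(x,y)·A₂(x,y), where A₁(x,y) = x−1+y and A₂(x,y) = Ψ₀(x,y) = x² − 1 − xy − 2y². -/
import Mathlib

/-- The two-dimensional rational map `F(x,y) = (x', y')`. -/
noncomputable def hanoiMap (p : ℝ × ℝ) : ℝ × ℝ :=
  (p.1 + 2 * p.2 ^ 2 * (-p.1 ^ 2 + p.1 + p.2 ^ 2) /
      ((p.1 - 1 - p.2) * (p.1 ^ 2 - 1 + p.2 - p.2 ^ 2)),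
   p.2 ^ 2 * (p.1 - 1 + p.2) /
      ((p.1 - 1 - p.2) * (p.1 ^ 2 - 1 + p.2 - p.2 ^ 2)))

/-- `L(x,y) = x - 1 - y`. -/
noncomputable def hanoiL (x y : ℝ) : ℝ := x - 1 - y

/-- `K(x,y) = x² - 1 + y - y²`. -/
noncomputable def hanoiK (x y : ℝ) : ℝ := x ^ 2 - 1 + y - y ^ 2

/-- `A₁(x,y) = x - 1 + y`. -/
noncomputable def hanoiA1 (x y : ℝ) : ℝ := x - 1 + y

/-- `A₂(x,y) = Ψ₀(x,y) = x² - 1 - xy - 2y²`. -/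
noncomputable def hanoiA2 (x y : ℝ) : ℝ := x ^ 2 - 1 - x * y - 2 * y ^ 2

/-- `K(x,y)·A₁(F(x,y)) = A₁(x,y)·A₂(x,y)` wherever `L·K ≠ 0`. -/
theorem K_mul_A1_of_F (x y : ℝ) (hLK : hanoiL x y * hanoiK x y ≠ 0) :
    hanoiK x y * hanoiA1 (hanoiMap (x, y)).1 (hanoiMap (x, y)).2 =
      hanoiA1 x y * hanoiA2 x y := by
  have hL : x - 1 - y ≠ 0 := fun h => hLK (by simp [hanoiL, hanoiK, h])
  have hK : x ^ 2 - 1 + y - y ^ 2 ≠ 0 := fun h => hLK (by simp [hanoiL, hanoiK, h])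
  simp only [hanoiMap, hanoiL, hanoiK, hanoiA1, hanoiA2]
  field_simp
  ring
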